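/- If φ : ℝ^n → ℝ is convex, differentiable, and ∇φ is β-Lipschitz, then ∇φ is (1/β)-cocoercive: ⟨∇φ(x) − ∇φ(y), x − y⟩ ≥ (1/β)‖∇φ(x) − ∇φ(y)‖² for all x, y ∈ ℝ^n. -/

import Mathlib

/-!
Sum the first-order convexity inequality `φ x + ⟪g x, z - x⟫ ≤ φ z` and the descent lemma
`φ z ≤ φ y + ⟪g y, z - y⟫ + β/2 ‖z - y‖²` at the point `z = y - β⁻¹ (g y - g x)`, which minimises
the quadratic upper bound. This sharpens convexity to
`φ x + ⟪g x, y - x⟫ + 1/(2β) ‖g y - g x‖² ≤ φ y`, and adding this to its copy with `x` and `y`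
exchanged gives cocoercivity.
-/

open Set

open scoped RealInnerProductSpace

section BaillonHaddad

variable {E : Type*} [NormedAddCommGroup E] [InnerProductSpace ℝ E] [CompleteSpace E]
  {φ : E → ℝ} {g : E → E}

theorem HasGradientAt.hasDerivAt_comp_add_smul {a v : E} {t : ℝ} {d : E}
    (h : HasGradientAt φ d (a + t • v)) :
    HasDerivAt (fun s : ℝ => φ (a + s • v)) ⟪d, v⟫ t := by
  have hline : HasDerivAt (fun s : ℝ => a + s • v) v t := by
    simpa using ((hasDerivAt_id t).smul_const v).const_add a
  simpa only [Function.comp_def, InnerProductSpace.toDual_apply_apply] using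
    h.hasFDerivAt.comp_hasDerivAt t hline

theorem ConvexOn.add_inner_sub_le_of_hasGradientAt (hφ : ConvexOn ℝ univ φ) {a b d : E}
    (hd : HasGradientAt φ d a) : φ a + ⟪d, b - a⟫ ≤ φ b := by
  have hconv : ConvexOn ℝ univ (fun t : ℝ => φ (a + t • (b - a))) := by
    have hline : (fun t : ℝ => φ (a + t • (b - a))) = φ ∘ AffineMap.lineMap a b := by
      ext t
      simp [AffineMap.lineMap_apply, add_comm]
    simpa [hline] using hφ.comp_affineMap (AffineMap.lineMap a b)
  have hderiv : HasDerivAt (fun t : ℝ => φ (a + t • (b - a))) ⟪d, b - a⟫ 0 :=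
    HasGradientAt.hasDerivAt_comp_add_smul (by simpa using hd)
  have hslope := hconv.le_slope_of_hasDerivAt (mem_univ 0) (mem_univ 1) one_pos hderiv
  simp only [slope_def_field, zero_smul, add_zero, one_smul, add_sub_cancel, sub_zero,
    div_one] at hslope
  linarith

theorem le_add_inner_sub_add_sq_of_lipschitz_gradient (hg : ∀ x, HasGradientAt φ (g x) x)
    {β : ℝ} (hLip : ∀ x y, ‖g x - g y‖ ≤ β * ‖x - y‖) (a b : E) :
    φ b ≤ φ a + ⟪g a, b - a⟫ + β / 2 * ‖b - a‖ ^ 2 := by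
  set v := b - a
  have hderiv (t : ℝ) : HasDerivAt (fun s : ℝ => φ (a + s • v)) ⟪g (a + t • v), v⟫ t :=
    (hg _).hasDerivAt_comp_add_smul
  have hbound (t : ℝ) : HasDerivAt (fun s : ℝ => φ a + s * ⟪g a, v⟫ + β / 2 * ‖v‖ ^ 2 * s ^ 2)
      (⟪g a, v⟫ + β * ‖v‖ ^ 2 * t) t := by
    refine ((((hasDerivAt_id t).mul_const ⟪g a, v⟫).const_add (φ a)).add
      ((hasDerivAt_pow 2 t).const_mul (β / 2 * ‖v‖ ^ 2))).congr_deriv ?_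
    ring
  have hslope (t : ℝ) (ht : t ∈ Ico (0 : ℝ) 1) :
      ⟪g (a + t • v), v⟫ ≤ ⟪g a, v⟫ + β * ‖v‖ ^ 2 * t := by
    have hcs : ⟪g (a + t • v) - g a, v⟫ ≤ β * ‖v‖ ^ 2 * t :=
      calc ⟪g (a + t • v) - g a, v⟫
          ≤ ‖g (a + t • v) - g a‖ * ‖v‖ := real_inner_le_norm _ _
        _ ≤ β * ‖(a + t • v) - a‖ * ‖v‖ := by gcongr; exact hLip _ _
        _ = β * ‖v‖ ^ 2 * t := by
          rw [add_sub_cancel_left, norm_smul, Real.norm_of_nonneg ht.1]; ring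
    rw [inner_sub_left] at hcs
    linarith
  have key := image_le_of_deriv_right_le_deriv_boundary
    (fun t _ => (hderiv t).continuousAt.continuousWithinAt)
    (fun t _ => (hderiv t).hasDerivWithinAt) (by simp)
    (fun t _ => (hbound t).continuousAt.continuousWithinAt)
    (fun t _ => (hbound t).hasDerivWithinAt) hslope (right_mem_Icc.mpr zero_le_one)
  simpa [v] using key

theorem ConvexOn.add_inner_sub_add_sq_norm_le (hφ : ConvexOn ℝ univ φ)
    (hg : ∀ x, HasGradientAt φ (g x) x) {β : ℝ} (hβ : 0 < β)
    (hLip : ∀ x y, ‖g x - g y‖ ≤ β * ‖x - y‖) (x y : E) :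
    φ x + ⟪g x, y - x⟫ + 1 / (2 * β) * ‖g y - g x‖ ^ 2 ≤ φ y := by
  set u := g y - g x
  set z := y - β⁻¹ • u
  have hconvex := hφ.add_inner_sub_le_of_hasGradientAt (b := z) (hg x)
  have hdescent := le_add_inner_sub_add_sq_of_lipschitz_gradient hg hLip y z
  have hzx : z - x = (y - x) - β⁻¹ • u := sub_right_comm y _ x
  have hzy : z - y = -(β⁻¹ • u) := sub_sub_cancel_left y _
  have hu : ⟪g y, u⟫ - ⟪g x, u⟫ = ‖u‖ ^ 2 := by
    rw [← inner_sub_left, real_inner_self_eq_norm_sq]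
  rw [hzx, inner_sub_right, real_inner_smul_right] at hconvex
  rw [hzy, inner_neg_right, real_inner_smul_right, norm_neg, norm_smul, Real.norm_eq_abs,
    abs_of_pos (inv_pos.mpr hβ)] at hdescent
  have hquad : β⁻¹ * ‖u‖ ^ 2 - β / 2 * (β⁻¹ * ‖u‖) ^ 2 = 1 / (2 * β) * ‖u‖ ^ 2 := by
    field_simp; ring
  linear_combination hconvex + hdescent - β⁻¹ * hu - hquad

theorem ConvexOn.cocoercive_of_lipschitz_gradient (hφ : ConvexOn ℝ univ φ)
    (hg : ∀ x, HasGradientAt φ (g x) x) {β : ℝ} (hβ : 0 < β)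
    (hLip : ∀ x y, ‖g x - g y‖ ≤ β * ‖x - y‖) (x y : E) :
    1 / β * ‖g x - g y‖ ^ 2 ≤ ⟪g x - g y, x - y⟫ := by
  have hxy := hφ.add_inner_sub_add_sq_norm_le hg hβ hLip x y
  have hyx := hφ.add_inner_sub_add_sq_norm_le hg hβ hLip y x
  rw [norm_sub_rev] at hxy
  have hinner : ⟪g x - g y, x - y⟫ = -⟪g x, y - x⟫ - ⟪g y, x - y⟫ := by
    rw [inner_sub_left, ← inner_neg_right, neg_sub]
  have hhalf : 1 / β = 1 / (2 * β) + 1 / (2 * β) := by ring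
  rw [hinner, hhalf]
  linarith

end BaillonHaddad

/-- Baillon–Haddad: the gradient of a convex differentiable function with
`β`-Lipschitz gradient is `(1/β)`-cocoercive. -/
theorem stmt18 (n : ℕ) (φ : EuclideanSpace ℝ (Fin n) → ℝ)
    (hφ : ConvexOn ℝ Set.univ φ)
    (g : EuclideanSpace ℝ (Fin n) → EuclideanSpace ℝ (Fin n))
    (hg : ∀ x, HasGradientAt φ (g x) x)
    (β : ℝ) (hβ : 0 < β) (hLip : ∀ x y, ‖g x - g y‖ ≤ β * ‖x - y‖) :
    ∀ x y, (1 / β) * ‖g x - g y‖ ^ 2 ≤ inner ℝ (g x - g y) (x - y) :=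
  hφ.cocoercive_of_lipschitz_gradient hg hβ hLip
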